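/- arXiv:1707.07080 — 3 statements merged into one kernel-verified Lean document; each statement's English description precedes it below -/
import Mathlib

section
/- Let s > 0, I_L > 0 and define π_F(I_F) = ((I_L + I_F)/(3 I_L))² - s I_F². If I_L > sqrt(2/(9s)), then the unique maximizer of π_F over [0, I_L] is I_F* = I_L/(9 s I_L² - 1); if I_L ≤ sqrt(2/(9s)), then the maximizer (breaking ties toward I_L) is I_F* = I_L. -/
/-!
With `D = 9 s I_L² - 1`, the payoff difference factors as
`π(y) - π(x) = (y - x) (2 I_L - D (x + y)) / (9 I_L²)`.
For `y = I_L / D` the second factor is `D (y - x)`, so when `D > 0` the difference is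
`D (y - x)² / (9 I_L²) > 0`; the threshold `I_L > √(2 / (9 s))` is `D > 1`, which puts `I_L / D`
in `[0, I_L]`. For `y = I_L` and `D ≤ 1` both factors are nonnegative on `[0, I_L]`.
-/

noncomputable def followerProfit (s IL x : ℝ) : ℝ :=
  ((IL + x) / (3 * IL)) ^ 2 - s * x ^ 2

section followerProfit

variable {s IL x y : ℝ}

theorem followerProfit_sub_followerProfit (hIL : IL ≠ 0) :
    followerProfit s IL y - followerProfit s IL x =
      (y - x) * (2 * IL - (9 * s * IL ^ 2 - 1) * (x + y)) / (9 * IL ^ 2) := by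
  unfold followerProfit
  field_simp
  ring

theorem followerProfit_lt_of_ne (hIL : IL ≠ 0) (hD : 0 < 9 * s * IL ^ 2 - 1)
    (hx : x ≠ IL / (9 * s * IL ^ 2 - 1)) :
    followerProfit s IL x < followerProfit s IL (IL / (9 * s * IL ^ 2 - 1)) := by
  set D := 9 * s * IL ^ 2 - 1 with hD_def
  have hslope : 2 * IL - D * (x + IL / D) = D * (IL / D - x) := by
    field_simp
    ring
  have hgap : 0 < (IL / D - x) ^ 2 := by
    positivity [sub_ne_zero.mpr hx.symm]
  rw [← sub_pos, followerProfit_sub_followerProfit hIL, ← hD_def, hslope]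
  calc (0 : ℝ) < D * (IL / D - x) ^ 2 / (9 * IL ^ 2) := by positivity
    _ = (IL / D - x) * (D * (IL / D - x)) / (9 * IL ^ 2) := by ring

theorem followerProfit_le_self (hIL : 0 < IL) (hD : 9 * s * IL ^ 2 ≤ 2)
    (hx : x ∈ Set.Icc 0 IL) : followerProfit s IL x ≤ followerProfit s IL IL := by
  obtain ⟨hx0, hxIL⟩ := hx
  have hslope : 0 ≤ 2 * IL - (9 * s * IL ^ 2 - 1) * (x + IL) := by
    nlinarith [mul_nonneg (sub_nonneg.mpr hD) (add_nonneg hx0 hIL.le)]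
  rw [← sub_nonneg, followerProfit_sub_followerProfit hIL.ne']
  exact div_nonneg (mul_nonneg (sub_nonneg.mpr hxIL) hslope) (by positivity)

end followerProfit

theorem sqrt_two_div_lt_iff {s IL : ℝ} (hs : 0 < s) (hIL : 0 < IL) :
    Real.sqrt (2 / (9 * s)) < IL ↔ 2 < 9 * s * IL ^ 2 := by
  rw [Real.sqrt_lt' hIL, div_lt_iff₀ (by positivity), mul_comm]

theorem stmt2 (s IL : ℝ) (hs : 0 < s) (hIL : 0 < IL)
    (piF : ℝ → ℝ)
    (hpiF : ∀ IF, piF IF = ((IL + IF) / (3 * IL)) ^ 2 - s * IF ^ 2) :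
    (IL > Real.sqrt (2 / (9 * s)) →
      (IL / (9 * s * IL ^ 2 - 1) ∈ Set.Icc (0 : ℝ) IL ∧
        ∀ x ∈ Set.Icc (0 : ℝ) IL, x ≠ IL / (9 * s * IL ^ 2 - 1) →
          piF x < piF (IL / (9 * s * IL ^ 2 - 1)))) ∧
    (IL ≤ Real.sqrt (2 / (9 * s)) →
      ∀ x ∈ Set.Icc (0 : ℝ) IL, piF x ≤ piF IL) := by
  obtain rfl : piF = followerProfit s IL := funext hpiF
  constructor
  · intro hgt
    have hD : 1 < 9 * s * IL ^ 2 - 1 := by linarith [(sqrt_two_div_lt_iff hs hIL).mp hgt]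
    refine ⟨⟨by positivity, div_le_self hIL.le hD.le⟩, fun x _ hne => ?_⟩
    exact followerProfit_lt_of_ne hIL.ne' (by linarith) hne
  · intro hle x hx
    have hD : 9 * s * IL ^ 2 ≤ 2 := not_lt.mp fun h => hle.not_gt ((sqrt_two_div_lt_iff hs hIL).mpr h)
    exact followerProfit_le_self hIL hD hx
end

section
/- There is no Nash equilibrium in prices with n_L = 0: if p_F* = p_L* − (I_L − I_F)/I_L with x_n ≤ 0 (so SP_L gets no consumers), then either SP_L can profitably deviate by lowering its price slightly (if p_L* > c), or SP_F with p_F* ≤ c can profitably deviate by raising its price slightly; hence no corner equilibrium with n_L = 0 exists. -/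
theorem stmt10 (c s γ IL IF : ℝ) (hIL : 0 < IL) (h0 : 0 ≤ IF) (h1 : IF ≤ IL)
    (nL : ℝ → ℝ → ℝ) (piL piF : ℝ → ℝ → ℝ)
    (hnL : ∀ pL pF, nL pL pF = max 0 (min 1 ((IL - IF) / IL + pF - pL)))
    (hπL : ∀ pL pF, piL pL pF = nL pL pF * (pL - c) + s * IF ^ 2 - γ * IL ^ 2)
    (hπF : ∀ pL pF, piF pL pF = (1 - nL pL pF) * (pF - c) - s * IF ^ 2) :
    ¬ ∃ pL pF : ℝ,
        (∀ pL' : ℝ, piL pL' pF ≤ piL pL pF) ∧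
        (∀ pF' : ℝ, piF pL pF' ≤ piF pL pF) ∧
        nL pL pF = 0 := by
  rintro ⟨pL, pF, hL, hF, h0n⟩
  set d := (IL - IF) / IL with hdDef
  have hd : 0 ≤ d := div_nonneg (by linarith) hIL.le
  have h0n' : max 0 (min 1 (d + pF - pL)) = 0 := by rw [← hnL]; exact h0n
  have hx : d + pF - pL ≤ 0 := by
    by_contra h
    push_neg at h
    have h2 : 0 < min 1 (d + pF - pL) := lt_min one_pos h
    have h3 := le_max_right (0 : ℝ) (min 1 (d + pF - pL))
    linarith
  rcases lt_or_ge c (d + pF) with hc | hc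
  · -- SP_L deviates to c + t with t = (d + pF - c)/2
    set t := (d + pF - c) / 2 with htDef
    have ht : 0 < t := by rw [htDef]; linarith
    have hmin : 0 < min 1 t := lt_min one_pos ht
    have key := hL (c + t)
    simp only [hπL, hnL, ← hdDef] at key
    rw [h0n'] at key
    have e : d + pF - (c + t) = t := by rw [htDef]; ring
    rw [e, max_eq_right hmin.le] at key
    nlinarith [mul_pos hmin ht]
  · have hpc : pF ≤ c := by linarith
    rcases lt_or_eq_of_le hpc with hlt | heq
    · -- SP_F deviates to c
      have key := hF c
      simp only [hπF, hnL, ← hdDef] at key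
      rw [h0n'] at key
      simp only [sub_self, mul_zero] at key
      nlinarith
    · -- pF = c, so d = 0 and c ≤ pL; SP_F deviates to c + 1/2
      have hd0 : d = 0 := le_antisymm (by linarith) hd
      have key := hF (c + 1/2)
      simp only [hπF, hnL, ← hdDef] at key
      rw [h0n'] at key
      have hM : max 0 (min 1 (d + (c + 1/2) - pL)) ≤ 1/2 :=
        max_le (by norm_num)
          (le_trans (min_le_right _ _) (by rw [hd0] at hx ⊢; linarith [heq ▸ hx]))
      nlinarith [hM, heq]
end

section
/- In the bargaining problem maximize u(I_F, I_L) = ((2I_L − I_F)/(3I_L))² + ((I_L + I_F)/(3I_L))² − γ I_L² − d_L − d_F subject to 0 ≤ I_F ≤ I_L and I_L ≥ I_min > 0 (γ > 0), every maximizer satisfies I_L = I_min, and I_F = 0 or I_F = I_min. -/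
theorem stmt14 (γ Imin dL dF : ℝ) (hγ : 0 < γ) (hImin : 0 < Imin)
    (u : ℝ → ℝ → ℝ)
    (hu : ∀ IF IL, u IF IL =
      ((2 * IL - IF) / (3 * IL)) ^ 2 + ((IL + IF) / (3 * IL)) ^ 2
        - γ * IL ^ 2 - dL - dF) :
    ∀ IF IL : ℝ, 0 ≤ IF → IF ≤ IL → Imin ≤ IL →
      (∀ IF' IL' : ℝ, 0 ≤ IF' → IF' ≤ IL' → Imin ≤ IL' →
        u IF' IL' ≤ u IF IL) →
      IL = Imin ∧ (IF = 0 ∨ IF = Imin) := by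
  intro IF IL hIF hle hmin hmax
  have hILpos : 0 < IL := lt_of_lt_of_le hImin hmin
  have h0 := hmax 0 Imin le_rfl (le_of_lt hImin) le_rfl
  rw [hu, hu] at h0
  have e1 : ((2 * Imin - 0) / (3 * Imin)) ^ 2 + ((Imin + 0) / (3 * Imin)) ^ 2
      = 5 / 9 := by
    field_simp
    ring
  rw [e1] at h0
  have eA : ((2 * IL - IF) / (3 * IL)) ^ 2 + ((IL + IF) / (3 * IL)) ^ 2
      = (5 * IL ^ 2 - 2 * IL * IF + 2 * IF ^ 2) / (9 * IL ^ 2) := by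
    field_simp
    ring
  rw [eA] at h0
  have hA : (5 * IL ^ 2 - 2 * IL * IF + 2 * IF ^ 2) / (9 * IL ^ 2) ≤ 5 / 9 := by
    rw [div_le_div_iff₀ (by positivity) (by norm_num)]
    nlinarith
  have hILeq : IL = Imin := by
    have h1 : γ * IL ^ 2 ≤ γ * Imin ^ 2 := by linarith
    have h2 : IL ^ 2 ≤ Imin ^ 2 := le_of_mul_le_mul_left h1 hγ
    have : IL ≤ Imin := by nlinarith
    exact le_antisymm this hmin
  refine ⟨hILeq, ?_⟩
  have h5 : (5 : ℝ) / 9 ≤ (5 * IL ^ 2 - 2 * IL * IF + 2 * IF ^ 2) / (9 * IL ^ 2) := by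
    rw [hILeq] at h0 ⊢
    linarith
  have hEq : 2 * IF * (IL - IF) = 0 := by
    have h6 := le_antisymm hA h5
    rw [div_eq_div_iff (by positivity) (by norm_num)] at h6
    nlinarith
  rcases mul_eq_zero.mp hEq with h | h
  · left; linarith
  · right
    have : IF = IL := by linarith [sub_eq_zero.mp h]
    rw [this, hILeq]
end
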